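/- arXiv:1701.02552 — 2 statements merged into one kernel-verified Lean document; each statement's English description precedes it below -/
import Mathlib

section
/- For all indices i, j ∈ {1,…,N} and all vectors z, z' ∈ ℂ^N, the classes [z]_i and [z']_j of probability measures have nonempty intersection if and only if i = j and z ∼ z'. -/
open MeasureTheory
open scoped Classical

namespace SPI

/-! ## Ontology -/

/-- Ontic states: particle position `q`, field amplitudes `u`, field strengths `τ`. -/
abbrev Lam (N : ℕ) := Fin N × (Fin N → ℂ) × (Fin N → ℝ)

/-- The constraint region of `Λ`: `|u j| ≤ 1` and `τ j ∈ [0,1]`. -/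
def onticSet (N : ℕ) : Set (Lam N) :=
  {l | (∀ j, ‖l.2.1 j‖ ≤ 1) ∧ ∀ j, l.2.2 j ∈ Set.Icc (0 : ℝ) 1}

/-- Highest field strength `τ_max`. -/
noncomputable def tmax {N : ℕ} (τ : Fin N → ℝ) : ℝ := ⨆ j, τ j

/-- `Δ_τ u` : the amplitude vector with only maximal-strength entries retained. -/
noncomputable def deltaVec {N : ℕ} (τ : Fin N → ℝ) (u : Fin N → ℂ) : Fin N → ℂ :=
  fun j => if τ j = tmax τ then u j else 0

/-- Proportionality `z ∼ z'` of complex vectors (a nonzero multiple). -/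
def Propto {N : ℕ} (v w : Fin N → ℂ) : Prop := ∃ α : ℂ, α ≠ 0 ∧ v = α • w

/-- The subset `Λ_z^i` of the ontic state space. -/
def lamSet {N : ℕ} (z : Fin N → ℂ) (i : Fin N) : Set (Lam N) :=
  {l | l.1 = i ∧ l.2.2 i = tmax l.2.2 ∧ 0 < tmax l.2.2 ∧ Propto (deltaVec l.2.2 l.2.1) z}

/-- Membership in the auxiliary class `[z]_i`: a (Borel) probability measure giving
full measure to `Λ_z^i`. -/
def memClassI {N : ℕ} (z : Fin N → ℂ) (i : Fin N) (μ : Measure (Lam N)) : Prop :=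
  IsProbabilityMeasure μ ∧ μ (lamSet z i) = 1

/-- Membership in the class `[z]` (for a unit vector `z`): mixtures `∑ |z i|² • pᵢ`
with `pᵢ ∈ [z]_i` (terms with `z i = 0` omitted). -/
def memClass {N : ℕ} (z : Fin N → ℂ) (μ : Measure (Lam N)) : Prop :=
  ∃ f : Fin N → Measure (Lam N),
    (∀ i, z i ≠ 0 → memClassI z i (f i)) ∧
    μ = ∑ i, ENNReal.ofReal (‖z i‖ ^ 2) • f i

/-- The `j`-th standard basis vector of `ℂ^N`. -/
def eVec {N : ℕ} (j : Fin N) : Fin N → ℂ := fun m => if m = j then 1 else 0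

/-! ## Parallel gate configurations -/

/-- A parallel gate configuration: a partition of the paths `{1,…,N}` into free paths `Fr`,
detector paths `De`, phase-shifter paths `Sh` (phases `ω`), and a collection `Bs` of pairwise
disjoint pairs (beam splitters with constants `R`, `T`, `R + T = 1`). -/
structure Config (N : ℕ) where
  Fr : Finset (Fin N)
  De : Finset (Fin N)
  Sh : Finset (Fin N)
  ω : Fin N → ℝ
  Bs : Finset (Fin N × Fin N)
  R : Fin N × Fin N → ℝ
  T : Fin N × Fin N → ℝ
  hR : ∀ p ∈ Bs, 0 ≤ R p
  hT : ∀ p ∈ Bs, 0 ≤ T p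
  hRT : ∀ p ∈ Bs, R p + T p = 1
  hst : ∀ p ∈ Bs, p.1 ≠ p.2
  hBB : ∀ p ∈ Bs, ∀ q ∈ Bs, p ≠ q → p.1 ≠ q.1 ∧ p.1 ≠ q.2 ∧ p.2 ≠ q.1 ∧ p.2 ≠ q.2
  hFD : Disjoint Fr De
  hFS : Disjoint Fr Sh
  hDS : Disjoint De Sh
  hBdisj : ∀ p ∈ Bs, p.1 ∉ Fr ∧ p.2 ∉ Fr ∧ p.1 ∉ De ∧ p.2 ∉ De ∧ p.1 ∉ Sh ∧ p.2 ∉ Sh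
  hcover : ∀ m : Fin N, m ∈ Fr ∨ m ∈ De ∨ m ∈ Sh ∨ ∃ p ∈ Bs, m = p.1 ∨ m = p.2

/-- Path `m` enters some beam splitter of the configuration. -/
def inB {N : ℕ} (c : Config N) (m : Fin N) : Prop := ∃ p ∈ c.Bs, m = p.1 ∨ m = p.2

/-- The new field strengths `τ'` produced by the parallel gates. -/
noncomputable def newTau {N : ℕ} (c : Config N) (q : Fin N) (τ : Fin N → ℝ) : Fin N → ℝ :=
  fun m =>
    if m ∈ c.De then (if q = m then 1 else 0)
    else if hm : inB c m then max (τ hm.choose.1) (τ hm.choose.2) / 2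
    else τ m / 2

/-- The new field amplitudes `u'` produced by the parallel gates. -/
noncomputable def newAmp {N : ℕ} (c : Config N) (q : Fin N) (u : Fin N → ℂ) (τ : Fin N → ℝ) :
    Fin N → ℂ :=
  fun m =>
    if m ∈ c.De then (if q = m then 1 else u m)
    else if m ∈ c.Sh then Complex.exp (Complex.I * (c.ω m : ℂ)) * u m
    else if hm : inB c m then
      (let p := hm.choose
       let ts := max (τ p.1) (τ p.2)
       let us : ℂ := if τ p.1 = ts then u p.1 else 0
       let ut : ℂ := if τ p.2 = ts then u p.2 else 0
       if m = p.1 then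
         Complex.I * (Real.sqrt (c.R p) : ℂ) * us + (Real.sqrt (c.T p) : ℂ) * ut
       else
         (Real.sqrt (c.T p) : ℂ) * us + Complex.I * (Real.sqrt (c.R p) : ℂ) * ut)
    else u m

/-- One step of the dynamics: the Markov kernel `K` of the parallel gate configuration,
as a measure-valued map on ontic states. -/
noncomputable def step {N : ℕ} (c : Config N) (l : Lam N) : Measure (Lam N) :=
  let q := l.1
  let u' := newAmp c q l.2.1 l.2.2
  let τ' := newTau c q l.2.2
  if hq : inB c q then
    (let p := hq.choose
     let a := ‖u' p.1‖ ^ 2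
     let b := ‖u' p.2‖ ^ 2
     if a + b = 0 then Measure.dirac (q, u', τ')
     else ENNReal.ofReal (a / (a + b)) • Measure.dirac (p.1, u', τ')
        + ENNReal.ofReal (b / (a + b)) • Measure.dirac (p.2, u', τ'))
  else Measure.dirac (q, u', τ')

/-- The output measure `pK` of the kernel applied to an input measure `p`. -/
noncomputable def out {N : ℕ} (c : Config N) (μ : Measure (Lam N)) : Measure (Lam N) :=
  μ.bind (step c)

/-! ## Interferometric matrices -/

/-- The projector `P_j` onto component `j`. -/
def Pmat {N : ℕ} (j : Fin N) : Matrix (Fin N) (Fin N) ℂ :=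
  Matrix.diagonal (fun a => if a = j then 1 else 0)

/-- The phase-shifter matrix `S_k(ω)`. -/
noncomputable def Smat {N : ℕ} (k : Fin N) (ω : ℝ) : Matrix (Fin N) (Fin N) ℂ :=
  Matrix.diagonal (fun a => if a = k then Complex.exp (Complex.I * (ω : ℂ)) else 1)

/-- The beam-splitter matrix `B_st(R,T)`: identity outside `{s,t}` and
`[[i√R, √T],[√T, i√R]]` on components `{s,t}`. -/
noncomputable def Bmat {N : ℕ} (s t : Fin N) (R T : ℝ) : Matrix (Fin N) (Fin N) ℂ :=
  Matrix.of fun a b =>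
    if a = s then
      (if b = s then Complex.I * (Real.sqrt R : ℂ) else if b = t then (Real.sqrt T : ℂ) else 0)
    else if a = t then
      (if b = s then (Real.sqrt T : ℂ) else if b = t then Complex.I * (Real.sqrt R : ℂ) else 0)
    else if a = b then 1 else 0

/-- The matrix `Δ_τ` selecting the components of maximal strength. -/
noncomputable def Dmat {N : ℕ} (τ : Fin N → ℝ) : Matrix (Fin N) (Fin N) ℂ :=
  Matrix.diagonal (fun j => if τ j = tmax τ then 1 else 0)

/-- The matrix `Δ^(st)_τ` with `δ_{τ_s,max(τ_s,τ_t)}`, `δ_{τ_t,max(τ_s,τ_t)}` at `s`, `t`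
and `1` elsewhere on the diagonal. -/
noncomputable def DmatST {N : ℕ} (τ : Fin N → ℝ) (s t : Fin N) : Matrix (Fin N) (Fin N) ℂ :=
  Matrix.diagonal (fun m =>
    if m = s then (if τ s = max (τ s) (τ t) then 1 else 0)
    else if m = t then (if τ t = max (τ s) (τ t) then 1 else 0)
    else 1)

/-! ## Commutation lemmas -/

lemma commute_diagonal {N : ℕ} (d e : Fin N → ℂ) :
    Commute (Matrix.diagonal d) (Matrix.diagonal e) := by
  have h : (fun i => d i * e i) = fun i => e i * d i := funext fun i => mul_comm _ _
  show Matrix.diagonal d * Matrix.diagonal e = Matrix.diagonal e * Matrix.diagonal d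
  rw [Matrix.diagonal_mul_diagonal, Matrix.diagonal_mul_diagonal, h]

lemma oneSubP_diagonal {N : ℕ} (j : Fin N) :
    (1 : Matrix (Fin N) (Fin N) ℂ) - Pmat j
      = Matrix.diagonal (fun a => 1 - if a = j then 1 else 0) := by
  rw [Pmat, ← Matrix.diagonal_one, Matrix.diagonal_sub]

lemma commute_oneSubP {N : ℕ} (j j' : Fin N) :
    Commute ((1 : Matrix (Fin N) (Fin N) ℂ) - Pmat j) (1 - Pmat j') := by
  rw [oneSubP_diagonal, oneSubP_diagonal]; exact commute_diagonal _ _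

/-- A matrix which differs from the identity only inside the block `{s,t} × {s,t}`. -/
def IsBlock {N : ℕ} (s t : Fin N) (M : Matrix (Fin N) (Fin N) ℂ) : Prop :=
  ∀ a b, ¬((a = s ∨ a = t) ∧ (b = s ∨ b = t)) →
    M a b = (1 : Matrix (Fin N) (Fin N) ℂ) a b

lemma commute_of_isBlock {N : ℕ} {s t s' t' : Fin N} {M M' : Matrix (Fin N) (Fin N) ℂ}
    (hM : IsBlock s t M) (hM' : IsBlock s' t' M')
    (h1 : s ≠ s') (h2 : s ≠ t') (h3 : t ≠ s') (h4 : t ≠ t') : Commute M M' := by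
  have hrow : ∀ a b : Fin N, a ≠ s → a ≠ t → (M - 1) a b = 0 := by
    intro a b ha hb
    have h := hM a b (by tauto)
    simp [Matrix.sub_apply, h]
  have hcol : ∀ a b : Fin N, b ≠ s → b ≠ t → (M - 1) a b = 0 := by
    intro a b hb1 hb2
    have h := hM a b (by tauto)
    simp [Matrix.sub_apply, h]
  have hrow' : ∀ a b : Fin N, a ≠ s' → a ≠ t' → (M' - 1) a b = 0 := by
    intro a b ha hb
    have h := hM' a b (by tauto)
    simp [Matrix.sub_apply, h]
  have hcol' : ∀ a b : Fin N, b ≠ s' → b ≠ t' → (M' - 1) a b = 0 := by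
    intro a b hb1 hb2
    have h := hM' a b (by tauto)
    simp [Matrix.sub_apply, h]
  have hEE' : (M - 1) * (M' - 1) = 0 := by
    ext a b
    rw [Matrix.mul_apply, Matrix.zero_apply]
    apply Finset.sum_eq_zero
    intro k _
    by_cases hk : k = s ∨ k = t
    · have : (M' - 1) k b = 0 := by
        rcases hk with h | h
        · subst h; exact hrow' _ _ h1 h2
        · subst h; exact hrow' _ _ h3 h4
      rw [this, mul_zero]
    · push_neg at hk
      rw [hcol a k hk.1 hk.2, zero_mul]
  have hE'E : (M' - 1) * (M - 1) = 0 := by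
    ext a b
    rw [Matrix.mul_apply, Matrix.zero_apply]
    apply Finset.sum_eq_zero
    intro k _
    by_cases hk : k = s' ∨ k = t'
    · have : (M - 1) k b = 0 := by
        rcases hk with h | h
        · subst h; exact hrow _ _ (Ne.symm h1) (Ne.symm h3)
        · subst h; exact hrow _ _ (Ne.symm h2) (Ne.symm h4)
      rw [this, mul_zero]
    · push_neg at hk
      rw [hcol' a k hk.1 hk.2, zero_mul]
  have expand : ∀ A B : Matrix (Fin N) (Fin N) ℂ,
      A * B = (A - 1) * (B - 1) + A + B - 1 := by
    intro A B; noncomm_ring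
  unfold Commute SemiconjBy
  rw [expand M M', expand M' M, hEE', hE'E]
  abel

lemma isBlock_Bmat {N : ℕ} (s t : Fin N) (R T : ℝ) : IsBlock s t (Bmat s t R T) := by
  intro a b hab
  by_cases has : a = s ∨ a = t
  · have hbs : ¬(b = s ∨ b = t) := fun h => hab ⟨has, h⟩
    push_neg at hbs
    have hb : a ≠ b := by
      rcases has with h | h <;> subst h
      · exact fun hc => hbs.1 hc.symm
      · exact fun hc => hbs.2 hc.symm
    rw [Matrix.one_apply_ne hb]
    rcases has with h | h <;> subst h <;> simp [Bmat, hbs.1, hbs.2]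
  · push_neg at has
    simp [Bmat, Matrix.one_apply, has.1, has.2]

lemma isBlock_one_sub_Pmat {N : ℕ} (j : Fin N) :
    IsBlock j j ((1 : Matrix (Fin N) (Fin N) ℂ) - Pmat j) := by
  intro a b hab
  have haj : a ≠ j ∨ b ≠ j := by tauto
  rw [oneSubP_diagonal]
  by_cases h : a = b
  · subst h
    have haj' : a ≠ j := by tauto
    simp [Matrix.diagonal_apply_eq, Matrix.one_apply_eq, haj']
  · simp [Matrix.diagonal_apply_ne _ h, Matrix.one_apply_ne h]

lemma isBlock_Smat {N : ℕ} (k : Fin N) (ω : ℝ) : IsBlock k k (Smat k ω) := by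
  intro a b hab
  have haj : a ≠ k ∨ b ≠ k := by tauto
  by_cases h : a = b
  · subst h
    have haj' : a ≠ k := by tauto
    simp [Smat, Matrix.diagonal_apply_eq, Matrix.one_apply_eq, haj']
  · simp [Smat, Matrix.diagonal_apply_ne _ h, Matrix.one_apply_ne h]

lemma isBlock_mul_diag {N : ℕ} (s t : Fin N) (M : Matrix (Fin N) (Fin N) ℂ)
    (hM : IsBlock s t M) (d : Fin N → ℂ) (hd : ∀ m, m ≠ s → m ≠ t → d m = 1) :
    IsBlock s t (M * Matrix.diagonal d) := by
  intro a b hab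
  rw [Matrix.mul_diagonal, hM a b hab]
  by_cases h : a = b
  · subst h
    have h1 : a ≠ s := fun hc => hab ⟨Or.inl hc, Or.inl hc⟩
    have h2 : a ≠ t := fun hc => hab ⟨Or.inr hc, Or.inr hc⟩
    rw [Matrix.one_apply_eq, hd a h1 h2, mul_one]
  · rw [Matrix.one_apply_ne h, zero_mul]

lemma isBlock_BmatD {N : ℕ} (s t : Fin N) (R T : ℝ) (τ : Fin N → ℝ) :
    IsBlock s t (Bmat s t R T * DmatST τ s t) := by
  unfold DmatST
  refine isBlock_mul_diag s t _ (isBlock_Bmat s t R T) _ ?_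
  intro m h1 h2
  simp [h1, h2]

/-! ## The matrix `W` of the configuration -/

noncomputable def Dprod {N : ℕ} (c : Config N) : Matrix (Fin N) (Fin N) ℂ :=
  c.De.noncommProd (fun j => 1 - Pmat j) (fun _ _ _ _ _ => commute_oneSubP _ _)

noncomputable def Sprod {N : ℕ} (c : Config N) : Matrix (Fin N) (Fin N) ℂ :=
  c.Sh.noncommProd (fun k => Smat k (c.ω k)) (fun _ _ _ _ _ => commute_diagonal _ _)

noncomputable def Bprod {N : ℕ} (c : Config N) : Matrix (Fin N) (Fin N) ℂ :=
  c.Bs.noncommProd (fun p => Bmat p.1 p.2 (c.R p) (c.T p))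
    (fun p hp q hq hpq => by
      obtain ⟨h1, h2, h3, h4⟩ := c.hBB p hp q hq hpq
      exact commute_of_isBlock (isBlock_Bmat _ _ _ _) (isBlock_Bmat _ _ _ _) h1 h2 h3 h4)

/-- The matrix `W = ∏_{j∈D}(1−P_j) ∏_{k∈S} S_k(ω_k) ∏_{{s,t}∈B} B_st(R_st,T_st)`. -/
noncomputable def Wmat {N : ℕ} (c : Config N) : Matrix (Fin N) (Fin N) ℂ :=
  Dprod c * Sprod c * Bprod c

/-- The vector `W z`. -/
noncomputable def Wvec {N : ℕ} (c : Config N) (z : Fin N → ℂ) : Fin N → ℂ :=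
  (Wmat c).mulVec z

/-- The product `∏_{{s,t}∈B} (B_st(R_st,T_st) Δ^(st)_τ)`. -/
noncomputable def BDprod {N : ℕ} (c : Config N) (τ : Fin N → ℝ) : Matrix (Fin N) (Fin N) ℂ :=
  c.Bs.noncommProd (fun p => Bmat p.1 p.2 (c.R p) (c.T p) * DmatST τ p.1 p.2)
    (fun p hp q hq hpq => by
      obtain ⟨h1, h2, h3, h4⟩ := c.hBB p hp q hq hpq
      exact commute_of_isBlock (isBlock_BmatD _ _ _ _ _) (isBlock_BmatD _ _ _ _ _) h1 h2 h3 h4)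

/-! Two full-mass sets of a probability measure meet as soon as one of them is measurable, and
`Λ_z^i` is Borel. A common point of `Λ_z^i` and `Λ_{z'}^j` has `q = i = j` and `Δ_τ u ∼ z, z'`.
Conversely, when `z ∼ z'` the Dirac mass at `(i, z, 1)` lies in both classes. -/

theorem Propto.refl {N : ℕ} (v : Fin N → ℂ) : Propto v v :=
  ⟨1, one_ne_zero, (one_smul ℂ v).symm⟩

theorem Propto.symm {N : ℕ} {v w : Fin N → ℂ} (h : Propto v w) : Propto w v := by
  obtain ⟨α, hα, rfl⟩ := h
  exact ⟨α⁻¹, inv_ne_zero hα, by rw [smul_smul, inv_mul_cancel₀ hα, one_smul]⟩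

theorem Propto.trans {N : ℕ} {u v w : Fin N → ℂ} (huv : Propto u v) (hvw : Propto v w) :
    Propto u w := by
  obtain ⟨α, hα, rfl⟩ := hvw
  obtain ⟨β, hβ, rfl⟩ := huv
  exact ⟨β * α, mul_ne_zero hβ hα, smul_smul β α w⟩

theorem measurableSet_setOf_propto {N : ℕ} (z : Fin N → ℂ) :
    MeasurableSet {v : Fin N → ℂ | Propto v z} := by
  rcases eq_or_ne z 0 with rfl | hz
  · convert measurableSet_singleton (0 : Fin N → ℂ) using 1
    ext v
    simpa [Propto] using fun _ : v = 0 => ⟨1, one_ne_zero⟩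
  · have h_span : {v | Propto v z} = ((ℂ ∙ z : Submodule ℂ (Fin N → ℂ)) : Set (Fin N → ℂ)) \ {0} := by
      ext v
      simp only [Propto, Set.mem_ofPred_eq, Set.mem_sdiff, SetLike.mem_coe,
        Submodule.mem_span_singleton, Set.mem_singleton_iff]
      constructor
      · rintro ⟨α, hα, rfl⟩
        exact ⟨⟨α, rfl⟩, smul_ne_zero hα hz⟩
      · rintro ⟨⟨α, rfl⟩, hv⟩
        exact ⟨α, left_ne_zero_of_smul hv, rfl⟩
    rw [h_span]
    exact (Submodule.closed_of_finiteDimensional _).measurableSet.diff (measurableSet_singleton 0)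

theorem measurable_tmax {N : ℕ} : Measurable (tmax : (Fin N → ℝ) → ℝ) :=
  Measurable.iSup fun j => measurable_pi_apply j

theorem measurableSet_setOf_eq_tmax {N : ℕ} (j : Fin N) :
    MeasurableSet {τ : Fin N → ℝ | τ j = tmax τ} :=
  measurableSet_eq_fun (measurable_pi_apply j) measurable_tmax

theorem measurable_deltaVec {N : ℕ} :
    Measurable fun p : (Fin N → ℝ) × (Fin N → ℂ) => deltaVec p.1 p.2 :=
  measurable_pi_lambda _ fun j =>
    Measurable.ite ((measurableSet_setOf_eq_tmax j).preimage measurable_fst)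
      ((measurable_pi_apply j).comp measurable_snd) measurable_const

theorem measurableSet_lamSet {N : ℕ} (z : Fin N → ℂ) (i : Fin N) :
    MeasurableSet (lamSet z i) := by
  have hτ : Measurable fun l : Lam N => l.2.2 := measurable_snd.comp measurable_snd
  have hΔ : Measurable fun l : Lam N => deltaVec l.2.2 l.2.1 :=
    measurable_deltaVec.comp (hτ.prodMk (measurable_fst.comp measurable_snd))
  exact (measurable_fst (measurableSet_singleton i)).inter <|
    ((measurableSet_setOf_eq_tmax i).preimage hτ).inter <|
      (measurableSet_lt measurable_const (measurable_tmax.comp hτ)).inter <|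
        hΔ (measurableSet_setOf_propto z)

theorem memClassI_inter_nonempty {N : ℕ} {z z' : Fin N → ℂ} {i j : Fin N}
    {μ : Measure (Lam N)} (hμ : memClassI z i μ) (hμ' : memClassI z' j μ) :
    (lamSet z i ∩ lamSet z' j).Nonempty := by
  obtain ⟨_, hμz⟩ := hμ
  refine nonempty_inter_of_measure_lt_add μ (measurableSet_lamSet z' j)
    (Set.subset_univ _) (Set.subset_univ _) ?_
  rw [measure_univ, hμz, hμ'.2]
  norm_num

theorem eq_and_propto_of_mem_lamSet {N : ℕ} {z z' : Fin N → ℂ} {i j : Fin N} {l : Lam N}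
    (hl : l ∈ lamSet z i) (hl' : l ∈ lamSet z' j) : i = j ∧ Propto z z' :=
  ⟨hl.1.symm.trans hl'.1, hl.2.2.2.symm.trans hl'.2.2.2⟩

theorem tmax_const {N : ℕ} [Nonempty (Fin N)] (c : ℝ) : tmax (fun _ : Fin N => c) = c :=
  ciSup_const

theorem deltaVec_const {N : ℕ} (c : ℝ) (u : Fin N → ℂ) : deltaVec (fun _ => c) u = u := by
  funext j
  have : Nonempty (Fin N) := ⟨j⟩
  simp [deltaVec, tmax_const]

theorem mem_lamSet_of_propto {N : ℕ} {u z : Fin N → ℂ} (i : Fin N) (h : Propto u z) :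
    (i, u, fun _ => (1 : ℝ)) ∈ lamSet z i := by
  have : Nonempty (Fin N) := ⟨i⟩
  refine ⟨rfl, (tmax_const 1).symm, ?_, ?_⟩
  · rw [tmax_const]
    exact one_pos
  · rwa [deltaVec_const]

theorem memClassI_dirac {N : ℕ} {z : Fin N → ℂ} {i : Fin N} {l : Lam N} (hl : l ∈ lamSet z i) :
    memClassI z i (Measure.dirac l) :=
  ⟨inferInstance, Measure.dirac_apply_of_mem hl⟩

/-- The classes `[z]_i` and `[z']_j` intersect iff `i = j` and `z ∼ z'`. -/
theorem classI_inter_nonempty_iff {N : ℕ} (i j : Fin N) (z z' : Fin N → ℂ) :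
    (∃ μ : Measure (Lam N), memClassI z i μ ∧ memClassI z' j μ) ↔ i = j ∧ Propto z z' := by
  constructor
  · rintro ⟨μ, hμ, hμ'⟩
    obtain ⟨l, hl, hl'⟩ := memClassI_inter_nonempty hμ hμ'
    exact eq_and_propto_of_mem_lamSet hl hl'
  · rintro ⟨rfl, hzz'⟩
    exact ⟨_, memClassI_dirac (mem_lamSet_of_propto i (Propto.refl z)),
      memClassI_dirac (mem_lamSet_of_propto i hzz')⟩

end SPI
end

section
/- (Matrix identity, Eq. (48).) Let τ ∈ [0,1]^N, let a parallel gate configuration be given by F, D, S, B, and suppose there is an index i with i ∉ D and τ_i = τ_max > 0. Define τ' ∈ ℝ^N by τ'_l = τ_l/2 for l ∈ F ∪ S, τ'_j = 0 for j ∈ D, and τ'_s = τ'_t = max(τ_s,τ_t)/2 for each {s,t} ∈ B. For each {s,t} ∈ B let Δ^(st)_τ be the diagonal matrix with entry δ_{τ_s, max(τ_s,τ_t)} in position s, entry δ_{τ_t, max(τ_s,τ_t)} in position t, and 1 elsewhere. Then Δ_{τ'} · ( ∏_{k∈S} S_k(ω_k) · ∏_{{s,t}∈B} B_st(R_st,T_st)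 Δ^(st)_τ ) = ( ∏_{j∈D} (1−P_j) · ∏_{k∈S} S_k(ω_k) · ∏_{{s,t}∈B} B_st(R_st,T_st) ) · Δ_τ. -/
open MeasureTheory
open scoped Classical

/-!
Since the factors for distinct beam splitters commute,
`∏ B_st Δ^(st)_τ = (∏ B_st) (∏ Δ^(st)_τ)`, and every other factor on either side is diagonal.
So entry `(a, b)` of each side is a diagonal weight times `(∏ B_st)_{ab}`, which vanishes unless
`a = b` or `a, b` enter the same beam splitter. For such `a, b` the weights agree: the maximum of
`τ'` is `τ_max / 2` (attained at `i`, and positive, so that detector rows drop out), and on a beam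
splitter `{s, t}` with `m = max(τ_s, τ_t) ≤ τ_max`, `δ_{m, τ_max} δ_{τ_b, m} = δ_{τ_b, τ_max}`.
-/

theorem Matrix.noncommProd_diagonal {ι n α : Type*} [Fintype n] [DecidableEq n] [CommSemiring α]
    (s : Finset ι) (g : ι → n → α) (comm) :
    s.noncommProd (fun x => Matrix.diagonal (g x)) comm
      = Matrix.diagonal fun m => ∏ x ∈ s, g x m := by
  have h := Finset.map_noncommProd s g (fun _ _ _ _ _ => Commute.all _ _)
    (Matrix.diagonalRingHom n α)
  simpa [Finset.noncommProd_eq_prod, Finset.prod_fn] using h.symm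

def Matrix.IsSupportedBy {n α : Type*} [Zero α] (r : n → n → Prop) (M : Matrix n n α) : Prop :=
  ∀ a b, M a b ≠ 0 → r a b

section Support

variable {n α : Type*} [Semiring α] {r : n → n → Prop}

theorem Matrix.isSupportedBy_one [DecidableEq n] [Std.Refl r] :
    (1 : Matrix n n α).IsSupportedBy r := by
  intro a b hab
  obtain rfl : a = b := by_contra fun h => hab (Matrix.one_apply_ne h)
  exact refl_of r a

theorem Matrix.IsSupportedBy.mul [Fintype n] [IsTrans n r] {M M' : Matrix n n α}
    (hM : M.IsSupportedBy r) (hM' : M'.IsSupportedBy r) : (M * M').IsSupportedBy r := by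
  intro a b hab
  obtain ⟨k, -, hk⟩ := Finset.exists_ne_zero_of_sum_ne_zero hab
  exact trans_of r (hM a k (left_ne_zero_of_mul hk)) (hM' k b (right_ne_zero_of_mul hk))

theorem Matrix.isSupportedBy_noncommProd {ι : Type*} [Fintype n] [DecidableEq n] [Std.Refl r]
    [IsTrans n r] (s : Finset ι) (f : ι → Matrix n n α) (comm) (h : ∀ x ∈ s, (f x).IsSupportedBy r) :
    (s.noncommProd f comm).IsSupportedBy r :=
  Finset.noncommProd_induction s f comm _ (fun _ _ => Matrix.IsSupportedBy.mul)
    Matrix.isSupportedBy_one h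

end Support

namespace SPI

lemma le_tmax {N : ℕ} (τ : Fin N → ℝ) (j : Fin N) : τ j ≤ tmax τ :=
  le_ciSup (Set.finite_range τ).bddAbove j

lemma tmax_eq_of_le {N : ℕ} {τ : Fin N → ℝ} {x : ℝ} (hle : ∀ k, τ k ≤ x) (j : Fin N)
    (hj : τ j = x) : tmax τ = x :=
  have : Nonempty (Fin N) := ⟨j⟩
  le_antisymm (ciSup_le hle) (hj ▸ le_tmax τ j)

namespace Config

variable {N : ℕ} (c : Config N)

def Coupled (a b : Fin N) : Prop :=
  a = b ∨ ∃ p ∈ c.Bs, (a = p.1 ∨ a = p.2) ∧ (b = p.1 ∨ b = p.2)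

variable {c}

lemma eq_of_shared_path {p q : Fin N × Fin N} (hp : p ∈ c.Bs) (hq : q ∈ c.Bs) {k : Fin N}
    (hkp : k = p.1 ∨ k = p.2) (hkq : k = q.1 ∨ k = q.2) : p = q := by
  by_contra hpq
  obtain ⟨h1, h2, h3, h4⟩ := c.hBB p hp q hq hpq
  rcases hkp with rfl | rfl <;> rcases hkq with h | h <;> contradiction

instance : Std.Refl c.Coupled := ⟨fun _ => Or.inl rfl⟩

instance : IsTrans (Fin N) c.Coupled := by
  refine ⟨?_⟩
  rintro a k b (rfl | ⟨p, hp, ha, hk⟩) (rfl | ⟨q, hq, hk', hb⟩)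
  · exact Or.inl rfl
  · exact Or.inr ⟨q, hq, hk', hb⟩
  · exact Or.inr ⟨p, hp, ha, hk⟩
  · obtain rfl := eq_of_shared_path hp hq hk hk'
    exact Or.inr ⟨p, hp, ha, hb⟩

lemma isSupportedBy_Bprod : (Bprod c).IsSupportedBy c.Coupled := by
  refine Matrix.isSupportedBy_noncommProd _ _ _ fun p hp a b hab => ?_
  by_cases hblock : (a = p.1 ∨ a = p.2) ∧ (b = p.1 ∨ b = p.2)
  · exact Or.inr ⟨p, hp, hblock⟩
  · rw [isBlock_Bmat _ _ _ _ a b hblock] at hab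
    exact Or.inl (by_contra fun h => hab (Matrix.one_apply_ne h))

end Config

lemma isBlock_DmatST {N : ℕ} (τ : Fin N → ℝ) (s t : Fin N) : IsBlock s t (DmatST τ s t) := by
  rw [← one_mul (DmatST τ s t)]
  exact isBlock_mul_diag s t 1 (fun _ _ _ => rfl) _ fun m h1 h2 => by simp [h1, h2]

lemma DmatST_apply_self_of_ne {N : ℕ} (τ : Fin N → ℝ) {s t m : Fin N} (hs : m ≠ s) (ht : m ≠ t) :
    DmatST τ s t m m = 1 := by
  simp [DmatST, hs, ht]

lemma DmatST_apply_self_of_mem {N : ℕ} (τ : Fin N → ℝ) {s t m : Fin N} (hst : s ≠ t)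
    (hm : m = s ∨ m = t) :
    DmatST τ s t m m = if τ m = max (τ s) (τ t) then 1 else 0 := by
  rcases hm with rfl | rfl
  · simp [DmatST]
  · simp [DmatST, hst.symm]

noncomputable def DSTprod {N : ℕ} (c : Config N) (τ : Fin N → ℝ) : Matrix (Fin N) (Fin N) ℂ :=
  c.Bs.noncommProd (fun p => DmatST τ p.1 p.2) (fun _ _ _ _ _ => commute_diagonal _ _)

lemma BDprod_eq {N : ℕ} (c : Config N) (τ : Fin N → ℝ) : BDprod c τ = Bprod c * DSTprod c τ :=
  Finset.noncommProd_mul_distrib _ _ _ _ fun p hp q hq hpq => by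
    obtain ⟨h1, h2, h3, h4⟩ := c.hBB p hp q hq hpq
    exact commute_of_isBlock (isBlock_DmatST _ _ _) (isBlock_Bmat _ _ _ _) h1 h2 h3 h4

lemma DSTprod_eq {N : ℕ} (c : Config N) (τ : Fin N → ℝ) :
    DSTprod c τ = Matrix.diagonal fun m => ∏ p ∈ c.Bs, DmatST τ p.1 p.2 m m :=
  (Finset.noncommProd_congr rfl
    (fun _ _ => (Matrix.isDiag_diagonal _).diagonal_diag.symm) _).trans
    (Matrix.noncommProd_diagonal c.Bs (fun p m => DmatST τ p.1 p.2 m m) _)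

lemma Dprod_eq {N : ℕ} (c : Config N) :
    Dprod c = Matrix.diagonal fun m => if m ∈ c.De then 0 else 1 := by
  refine ((Finset.noncommProd_congr rfl (fun j _ => oneSubP_diagonal j) _).trans
    (Matrix.noncommProd_diagonal c.De (fun j a => 1 - if a = j then 1 else 0) _)).trans ?_
  congr 1; ext m
  split_ifs with hm
  · exact Finset.prod_eq_zero hm (by simp)
  · exact Finset.prod_eq_one fun j hj => by simp [show m ≠ j from fun h => hm (h ▸ hj)]

lemma Sprod_eq {N : ℕ} (c : Config N) :
    Sprod c = Matrix.diagonal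
      fun m => if m ∈ c.Sh then Complex.exp (Complex.I * (c.ω m : ℂ)) else 1 := by
  refine (Matrix.noncommProd_diagonal c.Sh _ _).trans ?_
  congr 1; ext m
  split_ifs with hm
  · rw [Finset.prod_eq_single_of_mem m hm fun k _ hkm => by simp [Ne.symm hkm], if_pos rfl]
  · exact Finset.prod_eq_one fun j hj => by simp [show m ≠ j from fun h => hm (h ▸ hj)]

namespace Config

variable {N : ℕ} {c : Config N}

lemma not_mem_De_of_mem {p : Fin N × Fin N} (hp : p ∈ c.Bs) {a : Fin N}
    (ha : a = p.1 ∨ a = p.2) : a ∉ c.De := by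
  rcases ha with rfl | rfl
  exacts [(c.hBdisj p hp).2.2.1, (c.hBdisj p hp).2.2.2.1]

lemma prod_DmatST_of_not_inB (τ : Fin N → ℝ) {b : Fin N} (hb : ¬inB c b) :
    ∏ p ∈ c.Bs, DmatST τ p.1 p.2 b b = 1 :=
  Finset.prod_eq_one fun p hp =>
    DmatST_apply_self_of_ne τ (fun h => hb ⟨p, hp, Or.inl h⟩) (fun h => hb ⟨p, hp, Or.inr h⟩)

lemma prod_DmatST_of_mem (τ : Fin N → ℝ) {p : Fin N × Fin N} (hp : p ∈ c.Bs) {b : Fin N}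
    (hb : b = p.1 ∨ b = p.2) :
    ∏ q ∈ c.Bs, DmatST τ q.1 q.2 b b = if τ b = max (τ p.1) (τ p.2) then 1 else 0 := by
  rw [Finset.prod_eq_single_of_mem p hp fun q hq hqp => ?_,
    DmatST_apply_self_of_mem τ (c.hst p hp) hb]
  exact DmatST_apply_self_of_ne τ (fun h => hqp (eq_of_shared_path hq hp (Or.inl h) hb))
    (fun h => hqp (eq_of_shared_path hq hp (Or.inr h) hb))

variable (c) in
structure IsNewStrength (τ τ' : Fin N → ℝ) : Prop where
  free : ∀ l ∈ c.Fr, τ' l = τ l / 2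
  shifter : ∀ k ∈ c.Sh, τ' k = τ k / 2
  detector : ∀ j ∈ c.De, τ' j = 0
  splitter : ∀ p ∈ c.Bs, τ' p.1 = max (τ p.1) (τ p.2) / 2 ∧ τ' p.2 = max (τ p.1) (τ p.2) / 2

namespace IsNewStrength

variable {τ τ' : Fin N → ℝ}

lemma apply_of_mem (h : c.IsNewStrength τ τ') {p : Fin N × Fin N} (hp : p ∈ c.Bs) {a : Fin N}
    (ha : a = p.1 ∨ a = p.2) : τ' a = max (τ p.1) (τ p.2) / 2 := by
  rcases ha with rfl | rfl
  exacts [(h.splitter p hp).1, (h.splitter p hp).2]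

lemma trichotomy (h : c.IsNewStrength τ τ') (a : Fin N) :
    (a ∈ c.De ∧ τ' a = 0) ∨ (a ∉ c.De ∧ ¬inB c a ∧ τ' a = τ a / 2) ∨
      ∃ p ∈ c.Bs, a = p.1 ∨ a = p.2 := by
  rcases c.hcover a with ha | ha | ha | hB
  · refine Or.inr (Or.inl ⟨Finset.disjoint_left.mp c.hFD ha, ?_, h.free a ha⟩)
    rintro ⟨p, hp, rfl | rfl⟩
    exacts [(c.hBdisj p hp).1 ha, (c.hBdisj p hp).2.1 ha]
  · exact Or.inl ⟨ha, h.detector a ha⟩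
  · refine Or.inr (Or.inl ⟨Finset.disjoint_right.mp c.hDS ha, ?_, h.shifter a ha⟩)
    rintro ⟨p, hp, rfl | rfl⟩
    exacts [(c.hBdisj p hp).2.2.2.2.1 ha, (c.hBdisj p hp).2.2.2.2.2 ha]
  · exact Or.inr (Or.inr hB)

lemma tmax_eq (h : c.IsNewStrength τ τ') {i : Fin N} (hiD : i ∉ c.De) (hi : τ i = tmax τ)
    (h0 : 0 ≤ tmax τ) : tmax τ' = tmax τ / 2 := by
  have hmax_le (p : Fin N × Fin N) : max (τ p.1) (τ p.2) ≤ tmax τ :=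
    max_le (le_tmax τ _) (le_tmax τ _)
  refine tmax_eq_of_le (fun k => ?_) i ?_
  · rcases h.trichotomy k with ⟨-, hk⟩ | ⟨-, -, hk⟩ | ⟨p, hp, hkp⟩
    · rw [hk]; linarith
    · rw [hk]; linarith [le_tmax τ k]
    · rw [h.apply_of_mem hp hkp]; linarith [hmax_le p]
  · rcases h.trichotomy i with ⟨hiD', -⟩ | ⟨-, -, hi'⟩ | ⟨p, hp, hip⟩
    · exact absurd hiD' hiD
    · rw [hi', hi]
    · have : τ i ≤ max (τ p.1) (τ p.2) := by rcases hip with rfl | rfl <;> simp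
      rw [h.apply_of_mem hp hip, le_antisymm (hmax_le p) (hi ▸ this)]

lemma selection_weights_eq_of_mem (h : c.IsNewStrength τ τ') (hmax : tmax τ' = tmax τ / 2)
    {p : Fin N × Fin N} (hp : p ∈ c.Bs) {a b : Fin N} (ha : a = p.1 ∨ a = p.2)
    (hb : b = p.1 ∨ b = p.2) :
    (if τ' a = tmax τ' then 1 else 0) * ∏ q ∈ c.Bs, DmatST τ q.1 q.2 b b
      = (if a ∈ c.De then 0 else 1) * (if τ b = tmax τ then 1 else 0) := by
  have hb_le : τ b ≤ max (τ p.1) (τ p.2) := by rcases hb with rfl | rfl <;> simp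
  have hmax_le : max (τ p.1) (τ p.2) ≤ tmax τ := max_le (le_tmax τ _) (le_tmax τ _)
  rw [prod_DmatST_of_mem τ hp hb, h.apply_of_mem hp ha, hmax, if_neg (not_mem_De_of_mem hp ha),
    one_mul, ite_zero_mul_ite_zero, one_mul]
  simp only [div_left_inj' (two_ne_zero' ℝ)]
  refine if_congr ⟨fun h => h.2.trans h.1, fun hbt => ?_⟩ rfl rfl
  have hmt := le_antisymm hmax_le (hbt ▸ hb_le)
  exact ⟨hmt, hbt.trans hmt.symm⟩

lemma selection_weights_eq (h : c.IsNewStrength τ τ') (hmax : tmax τ' = tmax τ / 2) (hpos : 0 < tmax τ)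
    {a b : Fin N} (hab : c.Coupled a b) :
    (if τ' a = tmax τ' then 1 else 0) * ∏ q ∈ c.Bs, DmatST τ q.1 q.2 b b
      = (if a ∈ c.De then 0 else 1) * (if τ b = tmax τ then 1 else 0) := by
  rcases hab with rfl | ⟨p, hp, ha, hb⟩
  · rcases h.trichotomy a with ⟨haD, ha0⟩ | ⟨haD, haB, ha⟩ | ⟨p, hp, ha⟩
    · rw [ha0, hmax, if_neg (by linarith), if_pos haD, zero_mul, zero_mul]
    · rw [prod_DmatST_of_not_inB τ haB, ha, hmax, if_neg haD, mul_one, one_mul]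
      simp only [div_left_inj' (two_ne_zero' ℝ)]
    · exact h.selection_weights_eq_of_mem hmax hp ha ha
  · exact h.selection_weights_eq_of_mem hmax hp ha hb

end IsNewStrength

end Config

theorem matrix_identity_general {N : ℕ} (c : Config N) (τ : Fin N → ℝ)
    (i : Fin N) (hiD : i ∉ c.De)
    (hi : τ i = tmax τ) (hpos : 0 < tmax τ) (τ' : Fin N → ℝ)
    (hF : ∀ l ∈ c.Fr, τ' l = τ l / 2) (hS : ∀ k ∈ c.Sh, τ' k = τ k / 2)
    (hD : ∀ j ∈ c.De, τ' j = 0)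
    (hB : ∀ p ∈ c.Bs, τ' p.1 = max (τ p.1) (τ p.2) / 2 ∧ τ' p.2 = max (τ p.1) (τ p.2) / 2) :
    Dmat τ' * (Sprod c * BDprod c τ) = Wmat c * Dmat τ := by
  have h : c.IsNewStrength τ τ' := ⟨hF, hS, hD, hB⟩
  have hmax := h.tmax_eq hiD hi hpos.le
  ext a b
  simp only [BDprod_eq, DSTprod_eq, Sprod_eq, Wmat, Dprod_eq, Dmat, ← Matrix.mul_assoc,
    Matrix.diagonal_mul_diagonal, Matrix.diagonal_mul, Matrix.mul_diagonal]
  by_cases hB0 : Bprod c a b = 0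
  · simp [hB0]
  · have key := h.selection_weights_eq hmax hpos (Config.isSupportedBy_Bprod a b hB0)
    grind

/-- Matrix identity, Eq. (48).
`Δ_τ' (∏_{k∈S} S_k ∏_{{s,t}∈B} B_st Δ^(st)_τ) = (∏_{j∈D}(1−P_j) ∏_{k∈S} S_k ∏_{{s,t}∈B} B_st) Δ_τ`. -/
theorem matrix_identity {N : ℕ} (c : Config N) (τ : Fin N → ℝ)
    (hτ : ∀ j, τ j ∈ Set.Icc (0 : ℝ) 1) (i : Fin N) (hiD : i ∉ c.De)
    (hi : τ i = tmax τ) (hpos : 0 < tmax τ) (τ' : Fin N → ℝ)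
    (hF : ∀ l ∈ c.Fr, τ' l = τ l / 2) (hS : ∀ k ∈ c.Sh, τ' k = τ k / 2)
    (hD : ∀ j ∈ c.De, τ' j = 0)
    (hB : ∀ p ∈ c.Bs, τ' p.1 = max (τ p.1) (τ p.2) / 2 ∧ τ' p.2 = max (τ p.1) (τ p.2) / 2) :
    Dmat τ' * (Sprod c * BDprod c τ) = Wmat c * Dmat τ :=
  matrix_identity_general c τ i hiD hi hpos τ' hF hS hD hB

end SPI
end
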